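/- The map G ↦ G(∞) is a bijection from the set of words of the form W·P (where W is any word in the monoid generated by P and M) to the positive rational numbers, and its restriction to words of the form P·W·P is a bijection onto the rationals greater than 1. -/

import Mathlib

/-- The matrix of the Möbius transformation `P : x ↦ 1 + 1/x`. -/
def Pm : Matrix (Fin 2) (Fin 2) ℤ := !![1, 1; 1, 0]

/-- The matrix of the Möbius transformation `M : x ↦ 1/(1+x)`. -/
def Mm : Matrix (Fin 2) (Fin 2) ℤ := !![0, 1; 1, 1]

/-- A letter of a word in the monoid generated by `P` and `M`. -/
def toMat (b : Bool) : Matrix (Fin 2) (Fin 2) ℤ := if b then Pm else Mm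

/-- The product of a word in `P` and `M`. -/
def wordProd (w : List Bool) : Matrix (Fin 2) (Fin 2) ℤ := (w.map toMat).prod

/-- The image `G(∞)` of the point at infinity under the fractional linear
transformation with matrix `A`, namely `A₀₀ / A₁₀`. -/
def mobInf (A : Matrix (Fin 2) (Fin 2) ℤ) : ℚ := (A 0 0 : ℚ) / (A 1 0)

/-! For a word `W`, `(W·P)(∞) = W(1)`, and the first column `(a, b)` of `W·P` is obtained
from `(1, 1)` by the moves `(a, b) ↦ (a + b, a)` for `P` and `(a, b) ↦ (b, a + b)` for `M`.
These moves preserve coprimality and the subtractive Euclidean algorithm undoes them uniquely,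
so words correspond bijectively to coprime pairs of positive integers, i.e. to positive
rationals. The first letter is `P` exactly when `a > b`, and `P·W·P = (P·W)·P`, so the second
bijection is a restriction of the first. -/

namespace SternBrocot

def colPair : List Bool → ℕ × ℕ
  | [] => (1, 1)
  | true :: w => ((colPair w).1 + (colPair w).2, (colPair w).1)
  | false :: w => ((colPair w).2, (colPair w).1 + (colPair w).2)

theorem colPair_pos : ∀ w : List Bool, 0 < (colPair w).1 ∧ 0 < (colPair w).2
  | [] => by simp [colPair]
  | true :: w | false :: w => by have := colPair_pos w; simp only [colPair]; omega

theorem colPair_coprime : ∀ w : List Bool, (colPair w).1.Coprime (colPair w).2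
  | [] => by simp [colPair]
  | true :: w => Nat.coprime_self_add_left.mpr (colPair_coprime w).symm
  | false :: w => Nat.coprime_add_self_right.mpr (colPair_coprime w).symm

theorem colPair_snd_lt_fst_iff (w : List Bool) :
    (colPair w).2 < (colPair w).1 ↔ w.head? = some true := by
  rcases w with _ | ⟨_ | _, w⟩ <;> simp [colPair]
  all_goals have := colPair_pos w; omega

theorem colPair_injective : Function.Injective colPair := by
  intro w w' h
  induction w generalizing w' with
  | nil =>
    rcases w' with _ | ⟨_ | _, t⟩
    · rfl
    all_goals have := colPair_pos t; simp only [colPair, Prod.ext_iff] at h; omega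
  | cons b t ih =>
    have := colPair_pos t
    rcases w' with _ | ⟨b', t'⟩
    · cases b <;> simp only [colPair, Prod.ext_iff] at h <;> omega
    have := colPair_pos t'
    cases b <;> cases b' <;> simp only [colPair, Prod.ext_iff] at h <;>
      first | omega | exact congrArg _ (ih (Prod.ext (by omega) (by omega)))

theorem exists_colPair_eq (a b : ℕ) (ha : 0 < a) (hb : 0 < b) (hab : a.Coprime b) :
    ∃ w, colPair w = (a, b) := by
  rcases lt_trichotomy a b with h | rfl | h
  · have hc : (b - a).Coprime a := (Nat.coprime_sub_self_left h.le).mpr hab.symm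
    obtain ⟨w, hw⟩ := exists_colPair_eq (b - a) a (by omega) ha hc
    exact ⟨false :: w, by simp only [colPair, hw]; congr 1; omega⟩
  · exact ⟨[], by simp [colPair, (Nat.coprime_self a).mp hab]⟩
  · have hc : b.Coprime (a - b) := (Nat.coprime_sub_self_right h.le).mpr hab.symm
    obtain ⟨w, hw⟩ := exists_colPair_eq b (a - b) hb (by omega) hc
    exact ⟨true :: w, by simp only [colPair, hw]; congr 1; omega⟩
termination_by a + b

theorem wordProd_cons (b : Bool) (w : List Bool) : wordProd (b :: w) = toMat b * wordProd w := by
  simp [wordProd]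

theorem Pm_mul_wordProd_mul_Pm (w : List Bool) :
    Pm * wordProd w * Pm = wordProd (true :: w) * Pm := by
  simp [wordProd_cons, toMat]

theorem wordProd_mul_Pm_col : ∀ w : List Bool,
    (wordProd w * Pm) 0 0 = (colPair w).1 ∧ (wordProd w * Pm) 1 0 = (colPair w).2
  | [] => by simp [wordProd, colPair, Pm]
  | b :: w => by
    obtain ⟨h0, h1⟩ := wordProd_mul_Pm_col w
    rw [wordProd_cons, Matrix.mul_assoc]
    generalize wordProd w * Pm = B at h0 h1
    cases b <;>
      simp [toMat, Pm, Mm, Matrix.mul_apply, Fin.sum_univ_two, h0, h1, colPair, add_comm]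

theorem mobInf_wordProd_mul_Pm (w : List Bool) :
    mobInf (wordProd w * Pm) = ((colPair w).1 : ℚ) / (colPair w).2 := by
  simp [mobInf, wordProd_mul_Pm_col]

theorem natCast_div_inj_of_coprime {a b c d : ℕ} (hb : 0 < b) (hd : 0 < d) (hab : a.Coprime b)
    (hcd : c.Coprime d) (h : (a : ℚ) / b = c / d) : a = c ∧ b = d := by
  have := Rat.div_int_inj (a := a) (b := b) (c := c) (d := d) (by exact_mod_cast hb)
    (by exact_mod_cast hd) (by simpa using hab) (by simpa using hcd)
    (by simpa only [Int.cast_natCast] using h)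
  omega

theorem mobInf_wordProd_mul_Pm_injective :
    Function.Injective fun w : List Bool => mobInf (wordProd w * Pm) := by
  intro w w' h
  simp only [mobInf_wordProd_mul_Pm] at h
  obtain ⟨h1, h2⟩ := natCast_div_inj_of_coprime (colPair_pos w).2 (colPair_pos w').2
    (colPair_coprime w) (colPair_coprime w') h
  exact colPair_injective (Prod.ext h1 h2)

theorem range_mobInf_wordProd_mul_Pm :
    Set.range (fun w : List Bool => mobInf (wordProd w * Pm)) = {q : ℚ | 0 < q} := by
  ext q
  simp only [Set.mem_range, mobInf_wordProd_mul_Pm, Set.mem_ofPred_eq]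
  constructor
  · rintro ⟨w, rfl⟩
    obtain ⟨h1, h2⟩ := colPair_pos w
    positivity
  · intro hq
    have hnum : 0 < q.num := Rat.num_pos.mpr hq
    obtain ⟨w, hw⟩ := exists_colPair_eq q.num.natAbs q.den (by omega) q.pos q.reduced
    refine ⟨w, ?_⟩
    rw [hw, Nat.cast_natAbs, abs_of_pos hnum]
    exact q.num_div_den

theorem one_lt_mobInf_wordProd_mul_Pm_iff (w : List Bool) :
    1 < mobInf (wordProd w * Pm) ↔ w.head? = some true := by
  rw [mobInf_wordProd_mul_Pm, one_lt_div (by exact_mod_cast (colPair_pos w).2),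
    ← colPair_snd_lt_fst_iff]
  exact_mod_cast Iff.rfl

end SternBrocot

open SternBrocot in
theorem mobInf_bijections :
    (Function.Injective (fun w : List Bool => mobInf (wordProd w * Pm)) ∧
      Set.range (fun w : List Bool => mobInf (wordProd w * Pm)) = {q : ℚ | 0 < q}) ∧
    (Function.Injective (fun w : List Bool => mobInf (Pm * wordProd w * Pm)) ∧
      Set.range (fun w : List Bool => mobInf (Pm * wordProd w * Pm)) = {q : ℚ | 1 < q}) := by
  simp only [Pm_mul_wordProd_mul_Pm]
  refine ⟨⟨mobInf_wordProd_mul_Pm_injective, range_mobInf_wordProd_mul_Pm⟩,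
    mobInf_wordProd_mul_Pm_injective.comp (List.cons_injective (a := true)), ?_⟩
  ext q
  constructor
  · rintro ⟨w, rfl⟩
    exact (one_lt_mobInf_wordProd_mul_Pm_iff (true :: w)).mpr rfl
  · intro hq
    obtain ⟨w, rfl⟩ : q ∈ Set.range fun w : List Bool => mobInf (wordProd w * Pm) := by
      rw [range_mobInf_wordProd_mul_Pm]
      exact zero_lt_one.trans (α := ℚ) hq
    match w, (one_lt_mobInf_wordProd_mul_Pm_iff w).mp hq with
    | true :: t, _ => exact ⟨t, rfl⟩
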